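/- arXiv:1302.6647 — 3 statements merged into one kernel-verified Lean document; each statement's English description precedes it below -/
import Mathlib

section
/- Let S be a measurable space, π a probability measure on S, α a Markov kernel on S, q measurable with 0 < K_1 ≤ q ≤ K_2, satisfying detailed balance q(x)α(x,dy)π(dx) = q(y)α(y,dx)π(dy). Then the map η ↦ I(η) := ∫ q dη - ∫∫ (dη/dπ)^{1/2}(x)(dη/dπ)^{1/2}(y) q(x) α(x,dy) π(dx), defined on probability measures η ≪ π, is convex: for η_0, η_1 ≪ π and t ∈ [0,1], I(t η_0 + (1-t) η_1) ≤ t I(η_0) + (1-t) I(η_1). -/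
open MeasureTheory ProbabilityTheory

/-!
The second term of `J θ` equals `∫ q(x) √θ(x) √θ(y) d(π ⊗ α)(x, y)`, and `(a, b) ↦ √a √b` is
concave on `[0, ∞)²`, so that term is concave in `θ` while the first one is linear.
To make every integral genuine (rather than a junk `0`), detailed balance is used: it makes `q π`
invariant under `α`, hence `K₁ (α ∘ π) ≤ K₂ π`, so `θ(y)` is integrable on `π ⊗ α` as well as
`θ(x)`, and `√θ(x) √θ(y) ≤ θ(x) + θ(y)`.
-/

lemma Real.mul_sqrt_mul_sqrt_add_mul_le {a₀ a₁ b₀ b₁ s t : ℝ} (ha₀ : 0 ≤ a₀) (ha₁ : 0 ≤ a₁)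
    (hb₀ : 0 ≤ b₀) (hb₁ : 0 ≤ b₁) (hs : 0 ≤ s) (ht : 0 ≤ t) :
    s * (√a₀ * √b₀) + t * (√a₁ * √b₁) ≤ √(s * a₀ + t * a₁) * √(s * b₀ + t * b₁) := by
  obtain ⟨u₀, hu₀, rfl⟩ : ∃ u, 0 ≤ u ∧ u ^ 2 = a₀ := ⟨√a₀, Real.sqrt_nonneg _, Real.sq_sqrt ha₀⟩
  obtain ⟨u₁, hu₁, rfl⟩ : ∃ u, 0 ≤ u ∧ u ^ 2 = a₁ := ⟨√a₁, Real.sqrt_nonneg _, Real.sq_sqrt ha₁⟩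
  obtain ⟨v₀, hv₀, rfl⟩ : ∃ v, 0 ≤ v ∧ v ^ 2 = b₀ := ⟨√b₀, Real.sqrt_nonneg _, Real.sq_sqrt hb₀⟩
  obtain ⟨v₁, hv₁, rfl⟩ : ∃ v, 0 ≤ v ∧ v ^ 2 = b₁ := ⟨√b₁, Real.sqrt_nonneg _, Real.sq_sqrt hb₁⟩
  rw [Real.sqrt_sq hu₀, Real.sqrt_sq hu₁, Real.sqrt_sq hv₀, Real.sqrt_sq hv₁,
    ← Real.sqrt_mul (by positivity), Real.le_sqrt (by positivity) (by positivity)]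
  -- weighted Cauchy–Schwarz: the defect is `s t (u₀ v₁ - u₁ v₀)²`
  nlinarith [mul_nonneg (mul_nonneg hs ht) (sq_nonneg (u₀ * v₁ - u₁ * v₀))]

lemma Real.sqrt_mul_sqrt_le_abs_add_abs (a b : ℝ) : √a * √b ≤ |a| + |b| :=
  calc √a * √b ≤ √|a| * √|b| :=
        mul_le_mul (Real.sqrt_le_sqrt (le_abs_self a)) (Real.sqrt_le_sqrt (le_abs_self b))
          (Real.sqrt_nonneg _) (Real.sqrt_nonneg _)
    _ ≤ |a| + |b| := by
        nlinarith [sq_nonneg (√|a| - √|b|), Real.sq_sqrt (abs_nonneg a),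
          Real.sq_sqrt (abs_nonneg b)]

section
variable {X : Type*} [MeasurableSpace X]

lemma MeasureTheory.Integrable.sqrt_mul_sqrt {μ : Measure X} {f g : X → ℝ}
    (hf : Integrable f μ) (hg : Integrable g μ) : Integrable (fun x => √(f x) * √(g x)) μ :=
  (hf.norm.add hg.norm).mono'
    ((Real.continuous_sqrt.comp_aestronglyMeasurable hf.1).mul
      (Real.continuous_sqrt.comp_aestronglyMeasurable hg.1))
    (ae_of_all _ fun x => by
      rw [Real.norm_of_nonneg (by positivity)]
      exact Real.sqrt_mul_sqrt_le_abs_add_abs _ _)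

lemma MeasureTheory.integrable_of_isFiniteMeasure_withDensity_ofReal {μ : Measure X}
    {f : X → ℝ} (hf : AEStronglyMeasurable f μ) (hf0 : 0 ≤ᵐ[μ] f)
    [IsFiniteMeasure (μ.withDensity fun x => ENNReal.ofReal (f x))] : Integrable f μ := by
  refine ⟨hf, (hasFiniteIntegral_iff_ofReal hf0).2 ?_⟩
  simpa [withDensity_apply] using
    measure_lt_top (μ.withDensity fun x => ENNReal.ofReal (f x)) Set.univ

lemma MeasureTheory.Measure.comp_mono {Y : Type*} [MeasurableSpace Y] {μ ν : Measure X}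
    (h : μ ≤ ν) (κ : Kernel X Y) :
    κ ∘ₘ μ ≤ κ ∘ₘ ν :=
  Measure.le_iff.2 fun s hs => by
    simp only [Measure.bind_apply hs κ.aemeasurable]
    exact lintegral_mono' h le_rfl

lemma MeasureTheory.Measure.comp_eq_self_of_map_swap_compProd_eq {μ : Measure X} [SFinite μ]
    {κ : Kernel X X} [IsMarkovKernel κ] (h : (μ ⊗ₘ κ).map Prod.swap = μ ⊗ₘ κ) :
    κ ∘ₘ μ = μ :=
  calc κ ∘ₘ μ = ((μ ⊗ₘ κ).map Prod.swap).fst := by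
        rw [Measure.fst_map_swap, Measure.snd_compProd]
    _ = μ := by rw [h, Measure.fst_compProd]

lemma MeasureTheory.Measure.smul_comp_le_smul_of_comp_withDensity_eq {π : Measure X}
    {κ : Kernel X X} {w : X → ENNReal} {c₁ c₂ : ENNReal}
    (hinv : κ ∘ₘ π.withDensity w = π.withDensity w) (h₁ : ∀ x, c₁ ≤ w x) (h₂ : ∀ x, w x ≤ c₂) :
    c₁ • (κ ∘ₘ π) ≤ c₂ • π :=
  calc c₁ • (κ ∘ₘ π) = κ ∘ₘ π.withDensity fun _ => c₁ := by
        rw [withDensity_const, Measure.comp_smul]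
    _ ≤ κ ∘ₘ π.withDensity w := Measure.comp_mono (withDensity_mono (ae_of_all _ h₁)) κ
    _ = π.withDensity w := hinv
    _ ≤ π.withDensity fun _ => c₂ := withDensity_mono (ae_of_all _ h₂)
    _ = c₂ • π := withDensity_const _

lemma MeasureTheory.Integrable.comp_of_map_swap_compProd_eq {π : Measure X} [SFinite π]
    {κ : Kernel X X} [IsMarkovKernel κ] {q f : X → ℝ} {K₁ K₂ : ℝ} (hK₁ : 0 < K₁)
    (hq : ∀ x, K₁ ≤ q x ∧ q x ≤ K₂)
    (hrev : ((π.withDensity fun x => ENNReal.ofReal (q x)) ⊗ₘ κ).map Prod.swap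
        = (π.withDensity fun x => ENNReal.ofReal (q x)) ⊗ₘ κ)
    (hf : Integrable f π) : Integrable f (κ ∘ₘ π) := by
  have hle : ENNReal.ofReal K₁ • (κ ∘ₘ π) ≤ ENNReal.ofReal K₂ • π :=
    Measure.smul_comp_le_smul_of_comp_withDensity_eq
      (Measure.comp_eq_self_of_map_swap_compProd_eq hrev)
      (fun x => ENNReal.ofReal_le_ofReal (hq x).1) (fun x => ENNReal.ofReal_le_ofReal (hq x).2)
  exact (integrable_smul_measure (by simpa using hK₁) ENNReal.ofReal_ne_top).1
    ((hf.smul_measure ENNReal.ofReal_ne_top).mono_measure hle)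

lemma integral_mul_sqrt_mul_sqrt_add_le {ν : Measure (X × X)} {q θ₀ θ₁ : X → ℝ} {s t : ℝ}
    (hq : ∀ x, 0 ≤ q x) (hθ₀ : ∀ x, 0 ≤ θ₀ x) (hθ₁ : ∀ x, 0 ≤ θ₁ x) (hs : 0 ≤ s) (ht : 0 ≤ t)
    (h₀ : Integrable (fun p : X × X => q p.1 * √(θ₀ p.1) * √(θ₀ p.2)) ν)
    (h₁ : Integrable (fun p : X × X => q p.1 * √(θ₁ p.1) * √(θ₁ p.2)) ν)
    (h : Integrable (fun p : X × X =>
      q p.1 * √(s * θ₀ p.1 + t * θ₁ p.1) * √(s * θ₀ p.2 + t * θ₁ p.2)) ν) :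
    s * ∫ p, q p.1 * √(θ₀ p.1) * √(θ₀ p.2) ∂ν + t * ∫ p, q p.1 * √(θ₁ p.1) * √(θ₁ p.2) ∂ν
      ≤ ∫ p, q p.1 * √(s * θ₀ p.1 + t * θ₁ p.1) * √(s * θ₀ p.2 + t * θ₁ p.2) ∂ν := by
  rw [← integral_const_mul, ← integral_const_mul, ← integral_add (h₀.const_mul s) (h₁.const_mul t)]
  refine integral_mono ((h₀.const_mul s).add (h₁.const_mul t)) h fun p => ?_
  have := mul_le_mul_of_nonneg_left
    (Real.mul_sqrt_mul_sqrt_add_mul_le (hθ₀ p.1) (hθ₁ p.1) (hθ₀ p.2) (hθ₁ p.2) hs ht) (hq p.1)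
  dsimp only
  linarith

variable {π : Measure X} [SFinite π] {κ : Kernel X X} {q θ : X → ℝ}

lemma integrable_mul_sqrt_mul_sqrt_compProd [IsMarkovKernel κ] {C : ℝ} (hq : Measurable q)
    (hqC : ∀ x, ‖q x‖ ≤ C) (hθ : Integrable θ π) (hκθ : Integrable θ (κ ∘ₘ π)) :
    Integrable (fun p : X × X => q p.1 * √(θ p.1) * √(θ p.2)) (π ⊗ₘ κ) := by
  have hfst : Integrable (fun p : X × X => θ p.1) (π ⊗ₘ κ) :=
    (Measure.fst_compProd π κ ▸ hθ).comp_measurable measurable_fst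
  have hsnd : Integrable (fun p : X × X => θ p.2) (π ⊗ₘ κ) :=
    (Measure.snd_compProd π κ ▸ hκθ).comp_measurable measurable_snd
  simpa only [mul_assoc, Function.comp_apply] using (hfst.sqrt_mul_sqrt hsnd).bdd_mul
    (hq.comp measurable_fst).aestronglyMeasurable (ae_of_all _ fun p => hqC p.1)

lemma integral_compProd_mul_sqrt_mul_sqrt [IsSFiniteKernel κ]
    (h : Integrable (fun p : X × X => q p.1 * √(θ p.1) * √(θ p.2)) (π ⊗ₘ κ)) :
    ∫ p, q p.1 * √(θ p.1) * √(θ p.2) ∂(π ⊗ₘ κ) = ∫ x, q x * √(θ x) * ∫ y, √(θ y) ∂κ x ∂π := by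
  simp only [Measure.integral_compProd h, integral_const_mul]

end

/-- under detailed balance, the rate function
`I(η) = ∫ q dη - ∬ (dη/dπ)^{1/2}(x)(dη/dπ)^{1/2}(y) q(x) α(x,dy) π(dx)`,
expressed in terms of the densities `θ = dη/dπ` via
`J(θ) = ∫ q·θ dπ - ∫ q(x) √θ(x) (∫ √θ(y) α(x,dy)) π(dx)`,
is convex: `J(t θ₀ + (1-t) θ₁) ≤ t J(θ₀) + (1-t) J(θ₁)`. -/
theorem stmt10 {S : Type*} [MeasurableSpace S] (π : Measure S) [IsProbabilityMeasure π]
    (α : Kernel S S) [IsMarkovKernel α]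
    (q : S → ℝ) (hq : Measurable q) (K₁ K₂ : ℝ) (hK₁ : 0 < K₁)
    (hqb : ∀ x, K₁ ≤ q x ∧ q x ≤ K₂)
    (hdb : ((π.withDensity fun x => ENNReal.ofReal (q x)) ⊗ₘ α).map Prod.swap
        = (π.withDensity fun x => ENNReal.ofReal (q x)) ⊗ₘ α)
    (θ₀ θ₁ : S → ℝ) (h0m : Measurable θ₀) (h1m : Measurable θ₁)
    (h00 : ∀ x, 0 ≤ θ₀ x) (h10 : ∀ x, 0 ≤ θ₁ x)
    (hp0 : IsProbabilityMeasure (π.withDensity fun x => ENNReal.ofReal (θ₀ x)))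
    (hp1 : IsProbabilityMeasure (π.withDensity fun x => ENNReal.ofReal (θ₁ x)))
    (t : ℝ) (ht0 : 0 ≤ t) (ht1 : t ≤ 1)
    (J : (S → ℝ) → ℝ)
    (hJ : ∀ θ : S → ℝ, J θ = (∫ x, q x * θ x ∂π)
        - ∫ x, q x * Real.sqrt (θ x) * (∫ y, Real.sqrt (θ y) ∂(α x)) ∂π) :
    J (fun x => t * θ₀ x + (1 - t) * θ₁ x) ≤ t * J θ₀ + (1 - t) * J θ₁ := by
  have hq0 : ∀ x, 0 ≤ q x := fun x => hK₁.le.trans (hqb x).1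
  have hqK₂ : ∀ x, ‖q x‖ ≤ K₂ := fun x => (Real.norm_of_nonneg (hq0 x)).trans_le (hqb x).2
  have hG : ∀ θ, Integrable θ π →
      Integrable (fun p : S × S => q p.1 * √(θ p.1) * √(θ p.2)) (π ⊗ₘ α) := fun θ hθ =>
    integrable_mul_sqrt_mul_sqrt_compProd hq hqK₂ hθ (hθ.comp_of_map_swap_compProd_eq hK₁ hqb hdb)
  have hqθ : ∀ θ, Integrable θ π → Integrable (fun x => q x * θ x) π := fun θ hθ =>
    hθ.bdd_mul hq.aestronglyMeasurable (ae_of_all _ hqK₂)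
  have hint0 : Integrable θ₀ π :=
    integrable_of_isFiniteMeasure_withDensity_ofReal h0m.aestronglyMeasurable (ae_of_all _ h00)
  have hint1 : Integrable θ₁ π :=
    integrable_of_isFiniteMeasure_withDensity_ofReal h1m.aestronglyMeasurable (ae_of_all _ h10)
  have hintt : Integrable (fun x => t * θ₀ x + (1 - t) * θ₁ x) π :=
    (hint0.const_mul t).add (hint1.const_mul (1 - t))
  have hlin : ∫ x, q x * (t * θ₀ x + (1 - t) * θ₁ x) ∂π
      = t * ∫ x, q x * θ₀ x ∂π + (1 - t) * ∫ x, q x * θ₁ x ∂π := by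
    rw [← integral_const_mul, ← integral_const_mul,
      ← integral_add ((hqθ _ hint0).const_mul t) ((hqθ _ hint1).const_mul _)]
    congr with x
    ring
  have hconc := integral_mul_sqrt_mul_sqrt_add_le hq0 h00 h10 ht0 (sub_nonneg.2 ht1)
    (hG _ hint0) (hG _ hint1) (hG _ hintt)
  rw [hJ, hJ, hJ, ← integral_compProd_mul_sqrt_mul_sqrt (hG _ hint0),
    ← integral_compProd_mul_sqrt_mul_sqrt (hG _ hint1),
    ← integral_compProd_mul_sqrt_mul_sqrt (hG _ hintt)]
  linarith
end

section
/- Let (V, A) be a measurable space, k: V → ℝ bounded measurable, and θ a probability measure on V. Then -log ∫_V e^{-k} dθ = inf over probability measures γ on V of [R(γ‖θ) + ∫_V k dγ], and the infimum is attained uniquely at γ_0 with dγ_0/dθ(x) = e^{-k(x)} / ∫_V e^{-k} dθ. -/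
/-!
Tilting `θ` by `e^{-k}` gives the probability measure `γ₀`, and
`log dγ/dθ = log dγ/dγ₀ - k - log ∫ e^{-k} dθ` holds `γ`-a.e. Integrating against `γ` turns
`R(γ‖θ) + ∫ k dγ` into `R(γ‖γ₀) - log ∫ e^{-k} dθ`, so the infimum and its unique minimiser come
from Gibbs' inequality: `R(γ‖γ₀) ≥ 0`, with equality only for `γ = γ₀`.
-/

open MeasureTheory
open scoped Classical

/-- Relative entropy with values in `EReal`:
`∫ log (dγ/dθ) dγ` when `γ ≪ θ` and the integrand is integrable, `+∞` otherwise. -/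
noncomputable def relEntE {V : Type*} [MeasurableSpace V] (γ θ : Measure V) : EReal :=
  if γ ≪ θ ∧ Integrable (fun x => Real.log (γ.rnDeriv θ x).toReal) γ
  then ((∫ x, Real.log (γ.rnDeriv θ x).toReal ∂γ : ℝ) : EReal) else ⊤

open Real InformationTheory

section

variable {V : Type*} [MeasurableSpace V] {γ θ : Measure V}

lemma integrable_llr_tilted_right_iff [IsFiniteMeasure γ] [SigmaFinite θ] {f : V → ℝ}
    (hγθ : γ ≪ θ) (hfγ : Integrable f γ) (hfθ : Integrable (fun x => exp (f x)) θ) :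
    Integrable (llr γ (θ.tilted f)) γ ↔ Integrable (llr γ θ) γ := by
  rw [integrable_congr (llr_tilted_right hγθ hfθ)]
  exact integrable_add_iff_integrable_right' (hfγ.neg.add (integrable_const _))

variable [IsProbabilityMeasure γ] [IsProbabilityMeasure θ]

lemma relEntE_eq_klDiv : relEntE γ θ = klDiv γ θ := by
  by_cases h : γ ≪ θ ∧ Integrable (llr γ θ) γ
  · rw [← EReal.coe_ennreal_toReal (klDiv_ne_top h.1 h.2),
      toReal_klDiv_of_measure_eq h.1 (by simp)]
    exact if_pos h
  · have htop : klDiv γ θ = ⊤ := by rwa [← klDiv_ne_top_iff, not_not] at h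
    rw [htop]
    exact if_neg h

lemma klDiv_add_integral_eq_klDiv_tilted_add {k : V → ℝ} (hkγ : Integrable k γ)
    (hkθ : Integrable (fun x => exp (-k x)) θ) :
    (klDiv γ θ : EReal) + ∫ x, k x ∂γ
      = klDiv γ (θ.tilted fun x => -k x) + ((-log (∫ x, exp (-k x) ∂θ) : ℝ) : EReal) := by
  by_cases h : γ ≪ θ ∧ Integrable (llr γ θ) γ
  · have := isProbabilityMeasure_tilted hkθ
    have hac : γ ≪ θ.tilted fun x => -k x := h.1.trans (absolutelyContinuous_tilted hkθ)
    have hint := (integrable_llr_tilted_right_iff (f := fun x => -k x) h.1 hkγ.neg hkθ).2 h.2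
    have hformula := integral_llr_tilted_right (f := fun x => -k x) h.1 hkγ.neg hkθ h.2
    rw [← EReal.coe_ennreal_toReal (klDiv_ne_top h.1 h.2),
      ← EReal.coe_ennreal_toReal (klDiv_ne_top hac hint),
      toReal_klDiv_of_measure_eq h.1 (by simp), toReal_klDiv_of_measure_eq hac (by simp),
      hformula, integral_neg, ← EReal.coe_add, ← EReal.coe_add, EReal.coe_eq_coe_iff]
    ring
  · have hθ : klDiv γ θ = ⊤ := by rwa [← klDiv_ne_top_iff, not_not] at h
    have hγ₀ : klDiv γ (θ.tilted fun x => -k x) = ⊤ := by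
      rw [klDiv_eq_top_iff]
      intro hac hint
      have hac' := hac.trans (tilted_absolutelyContinuous θ _)
      exact h ⟨hac', (integrable_llr_tilted_right_iff hac' hkγ.neg hkθ).1 hint⟩
    simp only [hθ, hγ₀, EReal.coe_ennreal_top, EReal.top_add_coe]

end

/-- Donsker–Varadhan variational formula: for bounded measurable `k`
and a probability measure `θ`,
`-log ∫ e^{-k} dθ = inf_γ [R(γ‖θ) + ∫ k dγ]`, and the infimum is attained
uniquely at `γ₀` with `dγ₀/dθ = e^{-k} / ∫ e^{-k} dθ`. -/
theorem stmt11 {V : Type*} [MeasurableSpace V] (θ : Measure V) [IsProbabilityMeasure θ]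
    (k : V → ℝ) (hk : Measurable k) (hbdd : ∃ M : ℝ, ∀ x, |k x| ≤ M) :
    IsLeast {r : EReal | ∃ γ : Measure V, IsProbabilityMeasure γ ∧
        r = relEntE γ θ + ((∫ x, k x ∂γ : ℝ) : EReal)}
      (((-Real.log (∫ x, Real.exp (-(k x)) ∂θ) : ℝ) : EReal)) ∧
    ∀ γ : Measure V, IsProbabilityMeasure γ →
      relEntE γ θ + ((∫ x, k x ∂γ : ℝ) : EReal)
        = ((-Real.log (∫ x, Real.exp (-(k x)) ∂θ) : ℝ) : EReal) →
      γ = θ.withDensity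
          (fun x => ENNReal.ofReal (Real.exp (-(k x)) / ∫ x, Real.exp (-(k x)) ∂θ)) := by
  obtain ⟨M, hM⟩ := hbdd
  have hkint (γ : Measure V) [IsProbabilityMeasure γ] : Integrable k γ :=
    .of_bound hk.aestronglyMeasurable M (ae_of_all _ hM)
  have hexp : Integrable (fun x => exp (-k x)) θ :=
    .of_bound hk.neg.exp.aestronglyMeasurable (exp M) (ae_of_all _ fun x => by
      rw [norm_of_nonneg (exp_pos _).le, exp_le_exp]
      exact (neg_le_abs _).trans (hM x))
  set γ₀ := θ.tilted fun x => -k x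
  have hγ₀ : IsProbabilityMeasure γ₀ := isProbabilityMeasure_tilted hexp
  have hidentity (γ : Measure V) [IsProbabilityMeasure γ] :
      relEntE γ θ + ((∫ x, k x ∂γ : ℝ) : EReal)
        = klDiv γ γ₀ + ((-log (∫ x, exp (-k x) ∂θ) : ℝ) : EReal) := by
    rw [relEntE_eq_klDiv]
    exact klDiv_add_integral_eq_klDiv_tilted_add (hkint γ) hexp
  refine ⟨⟨⟨γ₀, hγ₀, ?_⟩, ?_⟩, fun γ _ h => ?_⟩
  · rw [hidentity, klDiv_self, EReal.coe_ennreal_zero, zero_add]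
  · rintro _ ⟨γ, _, rfl⟩
    rw [hidentity]
    exact le_add_of_nonneg_left (EReal.coe_ennreal_nonneg _)
  · rw [hidentity] at h
    have hzero : (klDiv γ γ₀ : EReal) = 0 := by
      simpa only [EReal.add_sub_cancel_right, ← EReal.coe_sub, sub_self, EReal.coe_zero]
        using congrArg (· - ((-log (∫ x, exp (-k x) ∂θ) : ℝ) : EReal)) h
    -- `θ.tilted f` unfolds to the density `e^f / ∫ e^f dθ` of the statement.
    exact (klDiv_eq_zero_iff (ν := γ₀)).1 (by exact_mod_cast hzero)
end

section
/- Let S be a standard Borel space, μ a probability measure on S×S with equal marginals [μ]_1 = [μ]_2, and let p be the kernel with μ = [μ]_1 ⊗ p; let α be another Markov kernel on S. For each N ≥ 1, the relative entropy of the N-step path measures satisfies R([μ]_1 ⊗ p ⊗ ··· ⊗ p ‖ [μ]_1 ⊗ α ⊗ ··· ⊗ α) = N · R([μ]_1 ⊗ p ‖ [μ]_1 ⊗ α), where the path measures on S^{N+1} are built by composing the kernels N times starting from [μ]_1. -/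
open MeasureTheory ProbabilityTheory
open scoped Classical
open scoped ENNReal

/-- Relative entropy (Kullback–Leibler divergence) with values in `ℝ≥0∞`. -/
noncomputable def relEnt {V : Type*} [MeasurableSpace V] (γ θ : Measure V) : ℝ≥0∞ :=
  if γ ≪ θ ∧ Integrable (fun x => Real.log (γ.rnDeriv θ x).toReal) γ
  then ENNReal.ofReal (∫ x, Real.log (γ.rnDeriv θ x).toReal ∂γ) else ⊤

/-- Law on `S^{n+1}` of a Markov chain with initial distribution `ν` and
transition kernel `κ`: `ν ⊗ κ ⊗ ⋯ ⊗ κ` (`n` kernel factors). -/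
noncomputable def pathMeasure {S : Type*} [MeasurableSpace S]
    (ν : Measure S) (κ : Kernel S S) : (n : ℕ) → Measure (Fin (n + 1) → S)
  | 0 => ν.map (fun x => fun _ => x)
  | (n + 1) =>
      ((pathMeasure ν κ n) ⊗ₘ
        (κ.comap (fun f : Fin (n + 1) → S => f (Fin.last n)) (measurable_pi_apply _))).map
        (fun p => Fin.snoc p.1 p.2)

/-! Write `Pₙ`, `Qₙ` for the path measures of `p` and `α`. `Pₙ₊₁` is the image of
`Pₙ ⊗ₘ (p ∘ last)` under the invertible map `Fin.snoc`, so the chain rule for the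
Kullback–Leibler divergence gives
`R(Pₙ₊₁ ‖ Qₙ₊₁) = R(Pₙ ‖ Qₙ) + R(Pₙ ⊗ₘ (p ∘ last) ‖ Pₙ ⊗ₘ (α ∘ last))`.
The density of the last pair is `dp/dα` evaluated at the last coordinate, so that term only sees
the law of the last coordinate under `Pₙ`, which is `[μ]₁` by invariance; it therefore equals
`R([μ]₁ ⊗ p ‖ [μ]₁ ⊗ α)`, and induction on `n` concludes. -/

namespace ProbabilityTheory.Kernel

variable {α β γ : Type*} {mα : MeasurableSpace α} {mβ : MeasurableSpace β}
  {mγ : MeasurableSpace γ}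

lemma comap_withDensity (κ : Kernel α β) [IsSFiniteKernel κ] {f : α → β → ℝ≥0∞}
    (hf : Measurable (Function.uncurry f)) {g : γ → α} (hg : Measurable g) :
    (κ.withDensity f).comap g hg = (κ.comap g hg).withDensity (fun c ↦ f (g c)) := by
  have hfg : Measurable (Function.uncurry fun c ↦ f (g c)) := hf.comp (hg.prodMap measurable_id)
  ext c : 1
  rw [comap_apply, Kernel.withDensity_apply _ hf, Kernel.withDensity_apply _ hfg, comap_apply]

end ProbabilityTheory.Kernel

namespace MeasureTheory.Measure

variable {α β γ : Type*} {mα : MeasurableSpace α} {mβ : MeasurableSpace β}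
  {mγ : MeasurableSpace γ}

lemma MutuallySingular.of_map {μ ν : Measure α} {g : α → β} (hg : Measurable g)
    (h : μ.map g ⟂ₘ ν.map g) : μ ⟂ₘ ν := by
  obtain ⟨s, hs, hμs, hνs⟩ := h
  refine ⟨g ⁻¹' s, hg hs, ?_, ?_⟩
  · rwa [map_apply hg hs] at hμs
  · rwa [map_apply hg hs.compl] at hνs

lemma map_prodMap_compProd_comap (ρ : Measure γ) [SFinite ρ] (κ : Kernel α β)
    [IsSFiniteKernel κ] {φ : γ → α} (hφ : Measurable φ) :
    (ρ ⊗ₘ κ.comap φ hφ).map (Prod.map φ id) = ρ.map φ ⊗ₘ κ := by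
  have hφid : Measurable (Prod.map φ (id : β → β)) := hφ.prodMap measurable_id
  ext s hs
  rw [map_apply hφid hs, compProd_apply (hφid hs), compProd_apply hs,
    lintegral_map (Kernel.measurable_kernel_prodMk_left hs) hφ]
  rfl

end MeasureTheory.Measure

namespace ProbabilityTheory

variable {α β γ : Type*} {mα : MeasurableSpace α} {mβ : MeasurableSpace β}
  {mγ : MeasurableSpace γ} [MeasurableSpace.CountableOrCountablyGenerated α β]

lemma rnDeriv_compProd_comap (ρ : Measure γ) [IsFiniteMeasure ρ] (κ η : Kernel α β)
    [IsFiniteKernel κ] [IsFiniteKernel η] {φ : γ → α} (hφ : Measurable φ) :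
    (ρ ⊗ₘ κ.comap φ hφ).rnDeriv (ρ ⊗ₘ η.comap φ hφ)
      =ᵐ[ρ ⊗ₘ η.comap φ hφ] fun p ↦ κ.rnDeriv η (φ p.1) p.2 := by
  have hr : Measurable (Function.uncurry (κ.rnDeriv η)) := Kernel.measurable_rnDeriv κ η
  have hφr : Measurable fun p : γ × β ↦ κ.rnDeriv η (φ p.1) p.2 :=
    hr.comp (hφ.prodMap measurable_id)
  -- pushed forward to `α × β`, where the singular sets of the kernels are measurable
  have hsing : ρ ⊗ₘ (κ.singularPart η).comap φ hφ ⟂ₘ ρ ⊗ₘ η.comap φ hφ := by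
    refine .of_map (hφ.prodMap measurable_id) ?_
    rw [Measure.map_prodMap_compProd_comap, Measure.map_prodMap_compProd_comap]
    exact .compProd_of_right _ _ (ae_of_all _ (Kernel.mutuallySingular_singularPart κ η))
  have hdecomp : κ.comap φ hφ = (η.withDensity (κ.rnDeriv η)).comap φ hφ
      + (κ.singularPart η).comap φ hφ := by
    conv_lhs => rw [← κ.rnDeriv_add_singularPart η]
    rfl
  have : IsFiniteKernel ((η.comap φ hφ).withDensity (fun c ↦ κ.rnDeriv η (φ c))) := by
    rw [← Kernel.comap_withDensity η hr hφ]; infer_instance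
  refine (Measure.eq_rnDeriv hφr hsing ?_).symm
  rw [hdecomp, Measure.compProd_add_right, Kernel.comap_withDensity η hr hφ,
    Measure.compProd_withDensity (f := fun c ↦ κ.rnDeriv η (φ c)) hφr, add_comm]

end ProbabilityTheory

namespace InformationTheory

open ProbabilityTheory

variable {α β γ : Type*} {mα : MeasurableSpace α} {mβ : MeasurableSpace β}
  {mγ : MeasurableSpace γ}

lemma klDiv_map_of_leftInverse (μ ν : Measure α) [IsFiniteMeasure μ] [IsFiniteMeasure ν]
    {g : α → β} {h : β → α} (hg : Measurable g) (hh : Measurable h)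
    (hhg : Function.LeftInverse h g) :
    klDiv (μ.map g) (ν.map g) = klDiv μ ν := by
  refine le_antisymm (klDiv_map_le μ ν hg) ?_
  have hid : h ∘ g = id := funext hhg
  simpa [Measure.map_map hh hg, hid] using klDiv_map_le (μ.map g) (ν.map g) hh

lemma klDiv_compProd_comap [MeasurableSpace.CountableOrCountablyGenerated α β]
    (ρ : Measure γ) [IsFiniteMeasure ρ] (κ η : Kernel α β) [IsFiniteKernel κ] [IsFiniteKernel η]
    {φ : γ → α} (hφ : Measurable φ) :
    klDiv (ρ ⊗ₘ κ.comap φ hφ) (ρ ⊗ₘ η.comap φ hφ) = klDiv (ρ.map φ ⊗ₘ κ) (ρ.map φ ⊗ₘ η) := by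
  have hφid : Measurable (Prod.map φ (id : β → β)) := hφ.prodMap measurable_id
  have hmap (ζ : Kernel α β) [IsSFiniteKernel ζ] :
      (ρ ⊗ₘ ζ.comap φ hφ).map (Prod.map φ id) = ρ.map φ ⊗ₘ ζ :=
    Measure.map_prodMap_compProd_comap ρ ζ hφ
  by_cases hac : ρ.map φ ⊗ₘ κ ≪ ρ.map φ ⊗ₘ η
  swap
  · rw [klDiv_of_not_ac hac, ← top_le_iff, ← klDiv_of_not_ac hac, ← hmap κ, ← hmap η]
    exact klDiv_map_le _ _ hφid
  have hac_comap : ρ ⊗ₘ κ.comap φ hφ ≪ ρ ⊗ₘ η.comap φ hφ :=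
    Measure.AbsolutelyContinuous.compProd_right
      (ae_of_ae_map hφ.aemeasurable (Measure.absolutelyContinuous_compProd_right_iff.1 hac))
  have hrn : ∀ᵐ x ∂(ρ ⊗ₘ η.comap φ hφ).map (Prod.map φ id),
      (ρ.map φ ⊗ₘ κ).rnDeriv (ρ.map φ ⊗ₘ η) x = κ.rnDeriv η x.1 x.2 := by
    rw [hmap η]
    exact rnDeriv_compProd_comap (ρ.map φ) κ η measurable_id
  have hrn_comap : ∀ᵐ p ∂(ρ ⊗ₘ η.comap φ hφ),
      (ρ ⊗ₘ κ.comap φ hφ).rnDeriv (ρ ⊗ₘ η.comap φ hφ) p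
        = (ρ.map φ ⊗ₘ κ).rnDeriv (ρ.map φ ⊗ₘ η) (Prod.map φ id p) := by
    filter_upwards [rnDeriv_compProd_comap ρ κ η hφ, ae_of_ae_map hφid.aemeasurable hrn]
      with p hp hp'
    rw [hp, hp']
    rfl
  rw [klDiv_eq_lintegral_klFun_of_ac hac_comap, klDiv_eq_lintegral_klFun_of_ac hac,
    lintegral_congr_ae (hrn_comap.mono fun p hp ↦ by rw [hp]),
    ← lintegral_map (f := fun x ↦ ENNReal.ofReal (klFun ((ρ.map φ ⊗ₘ κ).rnDeriv
      (ρ.map φ ⊗ₘ η) x).toReal)) (by fun_prop) hφid, hmap η]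

end InformationTheory

open InformationTheory

/-- `klDiv` adds the correction `θ.real univ - γ.real univ`, which vanishes for equal masses. -/
lemma relEnt_eq_klDiv {V : Type*} [MeasurableSpace V] (γ θ : Measure V)
    (h : γ Set.univ = θ Set.univ) : relEnt γ θ = klDiv γ θ := by
  by_cases hac : γ ≪ θ
  · by_cases hint : Integrable (llr γ θ) γ
    · rw [relEnt, if_pos ⟨hac, hint⟩, klDiv_of_ac_of_integrable hac hint, measureReal_def,
        measureReal_def, h, add_sub_cancel_right]
      rfl
    · rw [relEnt, if_neg fun hc ↦ hint hc.2, klDiv_of_not_integrable hint]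
  · rw [relEnt, if_neg fun hc ↦ hac hc.1, klDiv_of_not_ac hac]

section PathMeasure

variable {S : Type*} [MeasurableSpace S]

lemma measurable_snoc (n : ℕ) :
    Measurable fun p : (Fin (n + 1) → S) × S ↦ (Fin.snoc p.1 p.2 : Fin (n + 2) → S) := by
  refine measurable_pi_lambda _ fun i ↦ Fin.lastCases ?_ (fun j ↦ ?_) i
  · simpa using measurable_snd
  · simpa using measurable_fst.eval (a := j)

lemma measurable_init_last (n : ℕ) :
    Measurable fun f : Fin (n + 2) → S ↦ (Fin.init f, f (Fin.last (n + 1))) :=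
  (measurable_pi_lambda _ fun _ ↦ measurable_pi_apply _).prodMk (measurable_pi_apply _)

instance isProbabilityMeasure_pathMeasure (ν : Measure S) [IsProbabilityMeasure ν]
    (κ : Kernel S S) [IsMarkovKernel κ] (n : ℕ) : IsProbabilityMeasure (pathMeasure ν κ n) := by
  induction n with
  | zero => exact Measure.isProbabilityMeasure_map (by fun_prop)
  | succ n ih => exact Measure.isProbabilityMeasure_map (measurable_snoc n).aemeasurable

lemma map_last_pathMeasure {ν : Measure S} [IsProbabilityMeasure ν] {κ : Kernel S S}
    [IsMarkovKernel κ] (hν : κ ∘ₘ ν = ν) (n : ℕ) :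
    (pathMeasure ν κ n).map (fun f ↦ f (Fin.last n)) = ν := by
  induction n with
  | zero =>
    rw [pathMeasure, Measure.map_map (by fun_prop) (by fun_prop)]
    exact Measure.map_id
  | succ n ih =>
    rw [pathMeasure, Measure.map_map (by fun_prop) (measurable_snoc n)]
    have hlast : (fun f : Fin (n + 2) → S ↦ f (Fin.last (n + 1))) ∘
        (fun p : (Fin (n + 1) → S) × S ↦ (Fin.snoc p.1 p.2 : Fin (n + 2) → S)) = Prod.snd := by
      ext p; simp
    rw [hlast, ← Measure.snd, Measure.snd_compProd, ← Kernel.comp_deterministic_eq_comap,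
      ← Measure.comp_assoc, Measure.deterministic_comp_eq_map, ih, hν]

lemma klDiv_pathMeasure_succ [MeasurableSpace.CountablyGenerated S] {ν : Measure S}
    [IsProbabilityMeasure ν] {κ : Kernel S S} [IsMarkovKernel κ] (hν : κ ∘ₘ ν = ν)
    (η : Kernel S S) [IsMarkovKernel η] (n : ℕ) :
    klDiv (pathMeasure ν κ (n + 1)) (pathMeasure ν η (n + 1))
      = klDiv (pathMeasure ν κ n) (pathMeasure ν η n) + klDiv (ν ⊗ₘ κ) (ν ⊗ₘ η) := by
  rw [pathMeasure, pathMeasure,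
    klDiv_map_of_leftInverse _ _ (measurable_snoc n) (measurable_init_last n)
      (fun p ↦ by simp), klDiv_compProd_eq_add, klDiv_compProd_comap,
    map_last_pathMeasure hν]

lemma klDiv_pathMeasure [MeasurableSpace.CountablyGenerated S] {ν : Measure S}
    [IsProbabilityMeasure ν] {κ : Kernel S S} [IsMarkovKernel κ] (hν : κ ∘ₘ ν = ν)
    (η : Kernel S S) [IsMarkovKernel η] (n : ℕ) :
    klDiv (pathMeasure ν κ n) (pathMeasure ν η n) = n * klDiv (ν ⊗ₘ κ) (ν ⊗ₘ η) := by
  induction n with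
  | zero =>
    rw [Nat.cast_zero, zero_mul]
    exact klDiv_self _
  | succ n ih =>
    rw [klDiv_pathMeasure_succ hν, ih]
    push_cast
    ring

end PathMeasure

theorem stmt13_general {S : Type*} [MeasurableSpace S] [StandardBorelSpace S]
    (μ : Measure (S × S)) [IsProbabilityMeasure μ] (hμ : μ.fst = μ.snd)
    (p α : Kernel S S) [IsMarkovKernel p] [IsMarkovKernel α]
    (hp : μ = μ.fst ⊗ₘ p) (N : ℕ) :
    relEnt (pathMeasure μ.fst p N) (pathMeasure μ.fst α N)
      = N * relEnt (μ.fst ⊗ₘ p) (μ.fst ⊗ₘ α) := by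
  have hinv : p ∘ₘ μ.fst = μ.fst := by rw [← Measure.snd_compProd, ← hp, hμ]
  rw [relEnt_eq_klDiv _ _ (by simp), relEnt_eq_klDiv _ _ (by simp), klDiv_pathMeasure hinv]

/-- if `μ` on `S × S` has equal marginals and `μ = [μ]₁ ⊗ p`, then
for every `N ≥ 1`, the relative entropy of the `N`-step path measures satisfies
`R([μ]₁ ⊗ p ⊗ ⋯ ⊗ p ‖ [μ]₁ ⊗ α ⊗ ⋯ ⊗ α) = N · R([μ]₁ ⊗ p ‖ [μ]₁ ⊗ α)`. -/
theorem stmt13 {S : Type*} [MeasurableSpace S] [StandardBorelSpace S]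
    (μ : Measure (S × S)) [IsProbabilityMeasure μ] (hμ : μ.fst = μ.snd)
    (p α : Kernel S S) [IsMarkovKernel p] [IsMarkovKernel α]
    (hp : μ = μ.fst ⊗ₘ p) (N : ℕ) (hN : 1 ≤ N) :
    relEnt (pathMeasure μ.fst p N) (pathMeasure μ.fst α N)
      = N * relEnt (μ.fst ⊗ₘ p) (μ.fst ⊗ₘ α) :=
  stmt13_general μ hμ p α hp N
end
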